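/- arXiv:2404.12989 — 3 statements merged into one kernel-verified Lean document; each statement's English description precedes it below -/
import Mathlib

section
/- Let A be a p×t matrix and B a t×q matrix of formal power series over ℝ. Then Lace(AB) = Lace(A)·Lace(B), where the matrix product on the right is the product of ℤ×ℤ matrices (which is well defined since the matrices are supported on finitely many entries in each row below any fixed column). -/
open scoped BigOperators

/-- The coefficient of `x^n` in a power series, for an integer `n`
(zero when `n < 0`). -/
noncomputable def intCoeff (A : PowerSeries ℝ) (n : ℤ) : ℝ :=
  if 0 ≤ n then PowerSeries.coeff (R := ℝ) n.toNat A else 0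

/-- A `ℤ × ℤ` matrix is totally positive (TP) if every finite square
submatrix (rows and columns chosen in increasing order) has nonnegative
determinant. -/
def TP (M : ℤ → ℤ → ℝ) : Prop :=
  ∀ (n : ℕ) (r c : Fin n → ℤ), StrictMono r → StrictMono c →
    0 ≤ (Matrix.of fun a b => M (r a) (c b)).det

/-- The interlacing matrix `Lace(A)` of a `p × q` matrix of formal power
series: the `(u,v)`-entry, for `u = p·u' + i` (`0 ≤ i < p`) and
`v = q·v' + j` (`0 ≤ j < q`), is the coefficient of `x^(v'-u')` in `A i j`. -/
noncomputable def lace {p q : ℕ} [NeZero p] [NeZero q]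
    (A : Fin p → Fin q → PowerSeries ℝ) : ℤ → ℤ → ℝ := fun u v =>
  intCoeff
    (A ⟨(u % (p : ℤ)).toNat, by
          have hp : (0 : ℤ) < (p : ℤ) := by
            exact_mod_cast Nat.pos_of_ne_zero (NeZero.ne p)
          have h1 := Int.emod_nonneg u hp.ne'
          have h2 := Int.emod_lt_of_pos u hp
          omega⟩
       ⟨(v % (q : ℤ)).toNat, by
          have hq : (0 : ℤ) < (q : ℤ) := by
            exact_mod_cast Nat.pos_of_ne_zero (NeZero.ne q)
          have h1 := Int.emod_nonneg v hq.ne'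
          have h2 := Int.emod_lt_of_pos v hq
          omega⟩)
    (v / (q : ℤ) - u / (p : ℤ))

/-- A matrix of formal power series is fully interlacing when its
interlacing matrix is totally positive. -/
def FullyInterlacing {p q : ℕ} [NeZero p] [NeZero q]
    (A : Fin p → Fin q → PowerSeries ℝ) : Prop :=
  TP (lace A)

/-- A sequence of power series viewed as a `p × 1` column matrix. -/
noncomputable def colMat {p : ℕ} (A : Fin p → PowerSeries ℝ) :
    Fin p → Fin 1 → PowerSeries ℝ := fun i _ => A i

/-- `A(x)` interlaces `B(x)`: the `2 × 1` column `(A, B)ᵀ` is fully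
interlacing. -/
def SeriesInterlaces (A B : PowerSeries ℝ) : Prop :=
  FullyInterlacing (colMat ![A, B])

/-- A power series is AESW (a Pólya frequency sequence) when its Toeplitz
matrix `(a_{v-u})` is totally positive. -/
def IsAESW (A : PowerSeries ℝ) : Prop :=
  TP fun u v => intCoeff A (v - u)

/-- The `k`-th Veronese `r`-section `S_k^{(r)} A(x) = ∑_{n ≥ 0} a_{k+rn} xⁿ`. -/
noncomputable def veronese (r k : ℕ) (A : PowerSeries ℝ) : PowerSeries ℝ :=
  PowerSeries.mk fun n => PowerSeries.coeff (R := ℝ) (k + r * n) A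

/-! Write `u = p u' + i`, `v = q v' + j` and the summation index `w = t m + k`. Then the
`(u, v)` entry of `Lace(A) · Lace(B)` is `∑ₖ ∑ₘ [x^(m-u')] A i k · [x^(v'-m)] B k j`, where only
`u' ≤ m ≤ v'` contributes, and this is the Cauchy product formula for the coefficient of
`x^(v'-u')` in `∑ₖ A i k · B k j`. -/

open Finset

section intCoeff

variable (F G : PowerSeries ℝ)

theorem intCoeff_natCast (n : ℕ) : intCoeff F n = PowerSeries.coeff n F := by
  simp [intCoeff]

theorem intCoeff_of_neg {n : ℤ} (hn : n < 0) : intCoeff F n = 0 :=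
  if_neg hn.not_ge

theorem intCoeff_sum {ι : Type*} (s : Finset ι) (f : ι → PowerSeries ℝ) (n : ℤ) :
    intCoeff (∑ k ∈ s, f k) n = ∑ k ∈ s, intCoeff (f k) n := by
  unfold intCoeff
  split_ifs <;> simp

theorem intCoeff_sub_mul_intCoeff_sub_eq_zero {a b m : ℤ} (hm : m ∉ Icc a b) :
    intCoeff F (m - a) * intCoeff G (b - m) = 0 := by
  rw [mem_Icc, not_and_or, not_le, not_le] at hm
  rcases hm with h | h
  · rw [intCoeff_of_neg F (sub_neg.2 h), zero_mul]
  · rw [intCoeff_of_neg G (sub_neg.2 h), mul_zero]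

theorem intCoeff_mul_eq_sum_Icc (a b : ℤ) :
    intCoeff (F * G) (b - a) = ∑ m ∈ Icc a b, intCoeff F (m - a) * intCoeff G (b - m) := by
  rcases lt_or_ge b a with hba | hab
  · rw [intCoeff_of_neg _ (sub_neg.2 hba), Icc_eq_empty_of_lt hba, sum_empty]
  obtain ⟨N, hN⟩ := Int.eq_ofNat_of_zero_le (sub_nonneg.2 hab)
  rw [hN, intCoeff_natCast, PowerSeries.coeff_mul,
    Nat.sum_antidiagonal_eq_sum_range_succ fun i j => PowerSeries.coeff i F * PowerSeries.coeff j G]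
  refine sum_nbij' (fun k => a + k) (fun m => (m - a).toNat) ?_ ?_ ?_ ?_ ?_ <;>
    intro k hk <;> simp only [mem_range, mem_Icc] at hk ⊢
  iterate 4 omega
  · rw [show a + k - a = (k : ℤ) by ring, show b - (a + k) = ((N - k : ℕ) : ℤ) by omega,
      intCoeff_natCast, intCoeff_natCast]

end intCoeff

section lace

variable {p q : ℕ} [NeZero p] [NeZero q] (A : Fin p → Fin q → PowerSeries ℝ)

theorem lace_apply (u v : ℤ) :
    lace A u v = intCoeff (A (Int.divModEquiv p u).2 (Int.divModEquiv q v).2)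
      ((Int.divModEquiv q v).1 - (Int.divModEquiv p u).1) := by
  unfold lace
  have hp : (0 : ℤ) < p := by exact_mod_cast NeZero.pos p
  have hq : (0 : ℤ) < q := by exact_mod_cast NeZero.pos q
  have := Int.emod_lt_of_pos u hp
  have := Int.emod_lt_of_pos v hq
  congr 2 <;> ext <;> simp only [Int.divModEquiv_apply, Fin.val_ofNat, Int.natMod] <;>
    exact (Nat.mod_eq_of_lt (by omega)).symm

theorem lace_divModEquiv_symm (u v : ℤ) (i : Fin p) (j : Fin q) :
    lace A ((Int.divModEquiv p).symm (u, i)) ((Int.divModEquiv q).symm (v, j)) =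
      intCoeff (A i j) (v - u) := by
  simp only [lace_apply, Equiv.apply_symm_apply]

end lace

/-- `Lace(A·B) = Lace(A)·Lace(B)`, where the product of the `ℤ × ℤ`
matrices is taken entrywise as an (absolutely convergent, in fact finitely
supported) sum over `ℤ`. -/
theorem stmt4 {p t q : ℕ} [NeZero p] [NeZero t] [NeZero q]
    (A : Fin p → Fin t → PowerSeries ℝ) (B : Fin t → Fin q → PowerSeries ℝ) :
    lace (fun i j => ∑ k, A i k * B k j) =
      fun u v => ∑' w : ℤ, lace A u w * lace B w v := by
  funext u v
  obtain ⟨⟨u, i⟩, rfl⟩ := (Int.divModEquiv p).symm.surjective u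
  obtain ⟨⟨v, j⟩, rfl⟩ := (Int.divModEquiv q).symm.surjective v
  rw [lace_divModEquiv_symm, intCoeff_sum, ← (Int.divModEquiv t).symm.tsum_eq,
    tsum_eq_sum (s := Icc u v ×ˢ univ), sum_product_right]
  · simp only [lace_divModEquiv_symm, intCoeff_mul_eq_sum_Icc]
  · rintro ⟨m, k⟩ hmk
    rw [lace_divModEquiv_symm, lace_divModEquiv_symm]
    exact intCoeff_sub_mul_intCoeff_sub_eq_zero _ _ fun hm => hmk (mem_product.2 ⟨hm, mem_univ k⟩)
end

section
/- If A = (A_0(x), ..., A_{p-1}(x)) is a fully interlacing sequence of formal power series in ℝ[[x]], then for all nonnegative reals λ_0, ..., λ_{p-1}, A_0(x) interlaces Σ_i λ_i A_i(x) and Σ_i λ_i A_i(x) interlaces A_{p-1}(x). In particular every series in the nonnegative cone spanned by the A_i is an AESW series (Pólya frequency sequence). -/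
open scoped BigOperators

/-!
The series in question are rows of `M · A` for a nonnegative matrix `M` whose rows
have weakly increasing supports, e.g. the rows `(1, 0, …, 0)`, `(λ₀, …, λ_{p-1})`,
`(0, …, 0, 1)`. On the interlacing matrix, `Lace (M · A)` is obtained from `Lace A` by the
same kind of row operation, block by block, and by the Cauchy–Binet expansion of its minors
such an operation preserves total positivity. The AESW property is the one-row case.
-/

lemma TP.det_nonneg_of_monotone {M : ℤ → ℤ → ℝ} (hM : TP M) {n : ℕ} {r c : Fin n → ℤ}
    (hr : Monotone r) (hc : StrictMono c) :
    0 ≤ (Matrix.of fun a b => M (r a) (c b)).det := by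
  by_cases hinj : Function.Injective r
  · exact hM n r c (hr.strictMono_of_injective hinj) hc
  · obtain ⟨a, b, hab, hne⟩ := Function.not_injective_iff.mp hinj
    refine (Matrix.det_zero_of_row_eq hne ?_).ge
    funext j
    simp only [Matrix.of_apply, hab]

theorem TP.sum_mul_rows {ι : Type*} [Fintype ι] {L : ℤ → ℤ → ℝ} (hL : TP L)
    (μ : ℤ → ι → ℝ) (ρ : ℤ → ι → ℤ) (hμ : ∀ u i, 0 ≤ μ u i)
    (hρ : ∀ u u' i j, u < u' → μ u i ≠ 0 → μ u' j ≠ 0 → ρ u i ≤ ρ u' j) :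
    TP fun u v => ∑ i, μ u i * L (ρ u i) v := by
  intro n r c hr hc
  have expand : (Matrix.of fun a b => ∑ i, μ (r a) i * L (ρ (r a) i) (c b)).det
      = ∑ f : Fin n → ι, (∏ a, μ (r a) (f a)) *
          (Matrix.of fun a b => L (ρ (r a) (f a)) (c b)).det := by
    classical
    have := (Matrix.detRowAlternating (R := ℝ) (n := Fin n)).toMultilinearMap.map_sum
      (fun a i b => μ (r a) i * L (ρ (r a) i) (c b))
    convert this using 1
    · congr 1; ext a b; simp [Finset.sum_apply]
    · refine Finset.sum_congr rfl fun f _ => ?_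
      exact (Matrix.det_mul_column _ _).symm
  rw [expand]
  -- a term with a nonzero weight picks weakly increasing rows of `L`
  refine Finset.sum_nonneg fun f _ => ?_
  by_cases hf : ∃ a, μ (r a) (f a) = 0
  · obtain ⟨a, ha⟩ := hf
    rw [Finset.prod_eq_zero (Finset.mem_univ a) ha, zero_mul]
  · refine mul_nonneg (Finset.prod_nonneg fun a _ => hμ _ _) ?_
    refine hL.det_nonneg_of_monotone (fun a b hab => ?_) hc
    rcases hab.lt_or_eq with hlt | rfl
    · exact hρ _ _ _ _ (hr hlt) (fun h => hf ⟨a, h⟩) (fun h => hf ⟨b, h⟩)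
    · rfl

open scoped Fin.IntCast

lemma intCoeff_sum_s8 {ι : Type*} [Fintype ι] (l : ι → ℝ) (A : ι → PowerSeries ℝ) (m : ℤ) :
    intCoeff (∑ i, l i • A i) m = ∑ i, l i * intCoeff (A i) m := by
  unfold intCoeff
  split_ifs <;> simp

lemma lace_colMat {q : ℕ} [NeZero q] (B : Fin q → PowerSeries ℝ) (u v : ℤ) :
    lace (colMat B) u v = intCoeff (B u) (v - u / q) := by
  simp only [lace, colMat, Nat.cast_one, Int.ediv_one]
  congr 2
  ext
  simp

lemma lace_colMat_mul_add {p : ℕ} [NeZero p] (B : Fin p → PowerSeries ℝ) (w : ℤ) (i : Fin p)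
    (v : ℤ) : lace (colMat B) (p * w + i) v = intCoeff (B i) (v - w) := by
  have hp : (0 : ℤ) < p := by exact_mod_cast Nat.pos_of_ne_zero (NeZero.ne p)
  have hi : (i : ℤ) < p := by exact_mod_cast i.isLt
  have hmod : (p * w + i : ℤ) % p = i := by
    rw [add_comm, Int.add_mul_emod_self_left, Int.emod_eq_of_lt (by positivity) hi]
  have hdiv : (p * w + i : ℤ) / p = w := by
    rw [add_comm, Int.add_mul_ediv_left _ _ hp.ne', Int.ediv_eq_zero_of_lt (by positivity) hi,
      zero_add]
  have hcast : (((p * w + i : ℤ)) : Fin p) = i := by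
    ext
    simp [hmod]
  rw [lace_colMat, hcast, hdiv]

theorem isAESW_iff_fullyInterlacing (X : PowerSeries ℝ) :
    IsAESW X ↔ FullyInterlacing (colMat fun _ : Fin 1 => X) := by
  have hlace : lace (colMat fun _ : Fin 1 => X) = fun u v => intCoeff X (v - u) := by
    ext u v
    simp [lace_colMat]
  rw [IsAESW, FullyInterlacing, hlace]

/-- Such an `M` is totally positive, so this is a special case of the fact that products of fully
interlacing matrices are fully interlacing. -/
theorem FullyInterlacing.colMat_sum {p q : ℕ} [NeZero p] [NeZero q] {A : Fin p → PowerSeries ℝ}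
    (hA : FullyInterlacing (colMat A)) (M : Fin q → Fin p → ℝ) (hM : ∀ k i, 0 ≤ M k i)
    (hsupp : ∀ k k' i j, k < k' → M k i ≠ 0 → M k' j ≠ 0 → i ≤ j) :
    FullyInterlacing (colMat fun k => ∑ i, M k i • A i) := by
  have hlace : lace (colMat fun k => ∑ i, M k i • A i) =
      fun (u v : ℤ) => ∑ i, M u i * lace (colMat A) (p * (u / q) + i) v := by
    ext u v
    rw [lace_colMat]
    simp only [intCoeff_sum_s8, lace_colMat_mul_add]
  unfold FullyInterlacing
  rw [hlace]
  refine hA.sum_mul_rows _ _ (fun u i => hM _ _) fun u u' i j huu' hi hj => ?_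
  have hp : (0 : ℤ) < p := by exact_mod_cast Nat.pos_of_ne_zero (NeZero.ne p)
  have hq : (0 : ℤ) < q := by exact_mod_cast Nat.pos_of_ne_zero (NeZero.ne q)
  rcases (Int.ediv_le_ediv hq huu'.le).lt_or_eq with hlt | heq
  · have hip : (i : ℤ) < p := by exact_mod_cast i.isLt
    have hblock : p * (u / q + 1) ≤ p * (u' / q) := mul_le_mul_of_nonneg_left hlt hp.le
    have : (0 : ℤ) ≤ j := by positivity
    linarith
  · have hres : (u : Fin q) < u' := by
      have h₁ := Int.mul_ediv_add_emod u q
      have h₂ := Int.mul_ediv_add_emod u' q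
      have h₃ := Int.emod_nonneg u hq.ne'
      rw [heq] at h₁
      rw [Fin.lt_def, Fin.val_intCast, Fin.val_intCast]
      omega
    rw [heq]
    have hij : (i : ℤ) ≤ j := by exact_mod_cast hsupp _ _ _ _ hres hi hj
    linarith

/-- Convexity: if `(A₀, …, A_{p-1})` is fully interlacing then for all
nonnegative reals `λᵢ`, `A₀ ≺ ∑ λᵢ Aᵢ ≺ A_{p-1}`; in particular every
series in the cone is AESW. -/
theorem stmt8 {p : ℕ} [NeZero p] (A : Fin p → PowerSeries ℝ)
    (h : FullyInterlacing (colMat A)) (l : Fin p → ℝ) (hl : ∀ i, 0 ≤ l i) :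
    SeriesInterlaces (A 0) (∑ i, l i • A i) ∧
    SeriesInterlaces (∑ i, l i • A i)
      (A ⟨p - 1, by have := Nat.pos_of_ne_zero (NeZero.ne p); omega⟩) ∧
    IsAESW (∑ i, l i • A i) := by
  set last : Fin p := ⟨p - 1, by have := Nat.pos_of_ne_zero (NeZero.ne p); omega⟩
  refine ⟨?_, ?_, ?_⟩
  · have hcol : ![A 0, ∑ i, l i • A i] = fun k => ∑ i, ![Pi.single 0 1, l] k i • A i := by
      funext k
      fin_cases k <;> simp
    rw [SeriesInterlaces, hcol]
    exact h.colMat_sum _ (fun k => by fin_cases k <;> simp [Pi.single_apply, apply_ite, hl])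
      fun k k' i j hk hi _ => by fin_cases k <;> fin_cases k' <;> simp_all [Pi.single_apply]
  · have hcol : ![∑ i, l i • A i, A last] = fun k => ∑ i, ![l, Pi.single last 1] k i • A i := by
      funext k
      fin_cases k <;> simp
    rw [SeriesInterlaces, hcol]
    refine h.colMat_sum _ (fun k => by fin_cases k <;> simp [Pi.single_apply, apply_ite, hl])
      fun k k' i j hk _ hj => ?_
    fin_cases k <;> fin_cases k' <;> simp_all [Pi.single_apply, Fin.le_def, last]
    omega
  · exact (isAESW_iff_fullyInterlacing _).mpr (h.colMat_sum (fun _ => l) (fun _ => hl)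
      fun k k' _ _ hk => absurd hk (Subsingleton.elim k k').not_lt)
end

section
/- Let A be a p×q fully interlacing matrix of formal power series and r a positive integer. Then the (rp)×q matrix S^{(r)⊥}A obtained by vertically stacking S_{r-1}^{(r)}A, ..., S_1^{(r)}A, S_0^{(r)}A (top to bottom) is fully interlacing; its Lace matrix is the submatrix of Lace(A) consisting of all columns whose index is congruent to one of 0, 1, ..., q-1 modulo rq. -/
open scoped BigOperators

/-- The vertical stack `S^{(r)⊥} A` of `S_{r-1}^{(r)}A, …, S₀^{(r)}A`
(top to bottom), applied entrywise to a `p × q` matrix of power series. -/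
noncomputable def sectMatBot {p q : ℕ} [NeZero p] (r : ℕ)
    (A : Fin p → Fin q → PowerSeries ℝ) : Fin (r * p) → Fin q → PowerSeries ℝ :=
  fun u j => veronese r (r - 1 - (u : ℕ) / p)
    (A ⟨(u : ℕ) % p, Nat.mod_lt _ (Nat.pos_of_ne_zero (NeZero.ne p))⟩ j)

/-! Write a row index of `Lace(S^{(r)⊥}A)` as `u = rp·u' + p·a + i` (`a < r`, `i < p`) and a
column index as `v = q·v' + j`. The entry there is the coefficient of `x^(v'-u')` in
`S_{r-1-a}^{(r)} A_{ij}`, i.e. the coefficient of `x^(r v' - (r u' + a + 1 - r))` in `A_{ij}`,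
which is the entry of `Lace(A)` in row `u - p(r-1)` and column `rq·v' + j`. Both index maps are
strictly increasing, so every minor of `Lace(S^{(r)⊥}A)` is a minor of `Lace(A)`. -/

theorem TP.comp_strictMono {M : ℤ → ℤ → ℝ} (hM : TP M) {f g : ℤ → ℤ}
    (hf : StrictMono f) (hg : StrictMono g) : TP fun u v => M (f u) (g v) :=
  fun n rows cols hrows hcols => hM n (f ∘ rows) (g ∘ cols) (hf.comp hrows) (hg.comp hcols)

lemma Int.exists_eq_mul_add_fin (n : ℕ) [NeZero n] (u : ℤ) :
    ∃ (u' : ℤ) (i : Fin n), u = n * u' + (i : ℕ) := by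
  have hn : (0 : ℤ) < n := by exact_mod_cast Nat.pos_of_ne_zero (NeZero.ne n)
  refine ⟨u / n, ⟨(u % n).toNat, by have := Int.emod_lt_of_pos u hn; omega⟩, ?_⟩
  have := Int.emod_nonneg u hn.ne'
  have := Int.mul_ediv_add_emod u n
  simp only [Int.toNat_of_nonneg ‹0 ≤ u % n›]
  omega

lemma Int.mul_add_fin_ediv {n : ℕ} (u : ℤ) (i : Fin n) : (n * u + (i : ℕ)) / n = u := by
  have hn : (n : ℤ) ≠ 0 := by have := i.pos; omega
  rw [Int.mul_add_ediv_left _ _ hn, Int.ediv_eq_zero_of_lt (by omega) (by omega), add_zero]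

lemma Int.mul_add_fin_emod {n : ℕ} (u : ℤ) (i : Fin n) : (n * u + (i : ℕ)) % n = (i : ℕ) := by
  rw [Int.mul_add_emod_self_left, Int.emod_eq_of_lt (by omega) (by omega)]

lemma lace_mul_add {p q : ℕ} [NeZero p] [NeZero q] (A : Fin p → Fin q → PowerSeries ℝ)
    (u v : ℤ) (i : Fin p) (j : Fin q) :
    lace A (p * u + (i : ℕ)) (q * v + (j : ℕ)) = intCoeff (A i j) (v - u) := by
  simp only [lace, Int.mul_add_fin_emod, Int.toNat_natCast, Int.mul_add_fin_ediv]

lemma intCoeff_veronese {r k : ℕ} (hk : k < r) (B : PowerSeries ℝ) (n : ℤ) :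
    intCoeff (veronese r k B) n = intCoeff B (k + r * n) := by
  unfold intCoeff veronese
  by_cases hn : 0 ≤ n
  · lift n to ℕ using hn
    rw [if_pos (by positivity), if_pos (by positivity), PowerSeries.coeff_mk]
    norm_cast
  · have : (k : ℤ) + r * n < 0 := by nlinarith
    rw [if_neg hn, if_neg (by omega)]

lemma lace_sectMatBot {p q : ℕ} [NeZero p] [NeZero q] (r : ℕ) [NeZero r]
    (A : Fin p → Fin q → PowerSeries ℝ) (u v : ℤ) :
    lace (sectMatBot r A) u v = lace A (u - p * (r - 1)) (q * (r * (v / q)) + v % q) := by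
  obtain ⟨v, j, rfl⟩ := Int.exists_eq_mul_add_fin q v
  obtain ⟨u, m, rfl⟩ := Int.exists_eq_mul_add_fin (r * p) u
  have hp : 0 < p := Nat.pos_of_ne_zero (NeZero.ne p)
  let i : Fin p := ⟨m % p, Nat.mod_lt _ hp⟩
  have ha : (m : ℕ) / p < r := Nat.div_lt_of_lt_mul (m.isLt.trans_eq (mul_comm r p))
  have hm : ((m : ℕ) : ℤ) = p * ((m : ℕ) / p : ℕ) + (i : ℕ) := by
    exact_mod_cast (Nat.div_add_mod _ p).symm
  rw [Int.mul_add_fin_ediv, Int.mul_add_fin_emod, lace_mul_add]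
  change intCoeff (veronese r (r - 1 - (m : ℕ) / p) (A i j)) _ = _
  generalize (m : ℕ) / p = a at ha hm ⊢
  rw [intCoeff_veronese (by omega)]
  have hrow : ((r * p : ℕ) : ℤ) * u + (m : ℕ) - p * (r - 1)
      = p * (r * u + a + 1 - r) + (i : ℕ) := by
    rw [hm]; push_cast; ring
  rw [hrow, lace_mul_add]
  congr 1
  push_cast [Nat.sub_sub, Nat.cast_sub (by omega : 1 + a ≤ r)]
  ring

lemma Int.strictMono_mul_mul_ediv_add_emod {q r : ℕ} [NeZero q] [NeZero r] :
    StrictMono fun v : ℤ => q * (r * (v / q)) + v % q := by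
  have hq : (0 : ℤ) < q := by exact_mod_cast Nat.pos_of_ne_zero (NeZero.ne q)
  have hr : (1 : ℤ) ≤ r := by exact_mod_cast Nat.one_le_iff_ne_zero.mpr (NeZero.ne r)
  intro v w hvw
  have hv_lt := Int.emod_lt_of_pos v hq
  have hw_nonneg := Int.emod_nonneg w hq.ne'
  rcases (Int.ediv_le_ediv hq hvw.le).lt_or_eq with hlt | heq
  · have : q * (r * (v / q)) + q ≤ q * (r * (w / q)) :=
      calc q * (r * (v / q)) + q ≤ q * (r * (v / q)) + q * r := by nlinarith
        _ = q * (r * (v / q + 1)) := by ring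
        _ ≤ q * (r * (w / q)) := by gcongr; omega
    dsimp only
    linarith
  · have hv := Int.mul_ediv_add_emod v q
    have hw := Int.mul_ediv_add_emod w q
    dsimp only
    rw [heq] at hv ⊢
    linarith

lemma Int.mixedRadix_ediv_add_emod (p r u : ℤ) :
    p * (r * (u / (p * r)) + u % (p * r) / p) + u % p = u := by
  have h₁ := Int.mul_ediv_add_emod u (p * r)
  have h₂ := Int.mul_ediv_add_emod (u % (p * r)) p
  rw [Int.emod_emod_of_dvd u (dvd_mul_right p r)] at h₂
  linear_combination h₁ + h₂

/-- If `A` is fully interlacing then so is `S^{(r)⊥} A`; moreover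
`Lace(S^{(r)⊥}A)` is the submatrix of `Lace(A)` consisting of all columns
whose index is congruent to one of `0, 1, …, q-1` modulo `rq` (the column
of index `v = q·v' + j` of `Lace(S^{(r)⊥}A)` is the column of index
`rq·v' + j` of `Lace(A)`, the rows being suitably re-enumerated). -/
theorem stmt14 {p q : ℕ} [NeZero p] [NeZero q] (r : ℕ) [NeZero r]
    (A : Fin p → Fin q → PowerSeries ℝ) (hA : FullyInterlacing A) :
    FullyInterlacing (sectMatBot r A) ∧
      ∀ u v : ℤ, lace (sectMatBot r A) u v =
        lace A
          ((p : ℤ) * ((r : ℤ) * (u / ((p : ℤ) * (r : ℤ)))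
              + (u % ((p : ℤ) * (r : ℤ))) / (p : ℤ) + 1 - (r : ℤ))
            + u % (p : ℤ))
          ((q : ℤ) * ((r : ℤ) * (v / (q : ℤ))) + v % (q : ℤ)) := by
  refine ⟨?_, fun u v => ?_⟩
  · have hlace : lace (sectMatBot r A) = fun u v =>
        lace A (u - p * (r - 1)) (q * (r * (v / q)) + v % q) :=
      funext₂ (lace_sectMatBot r A)
    rw [FullyInterlacing, hlace]
    exact hA.comp_strictMono (fun _ _ h => sub_lt_sub_right h _)
      Int.strictMono_mul_mul_ediv_add_emod
  · have hrow : u - p * (r - 1)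
        = p * (r * (u / (p * r)) + u % (p * r) / p + 1 - r) + u % p := by
      linear_combination -Int.mixedRadix_ediv_add_emod p r u
    rw [lace_sectMatBot, hrow]
end
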